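/- arXiv:1903.10875 — 2 statements merged into one kernel-verified Lean document; each statement's English description precedes it below -/
import Mathlib

section
/- Let A ∈ ℂ^{N_d×N} and B ∈ ℂ^{N×N_s}, and suppose every column of A and every column of B^* is nonzero. Define the (N_sN_d)×N matrix Φ by Φ_{(m,n),j} = A_{mj} B_{jn}, where (m,n) is a composite row index with 1 ≤ m ≤ N_d and 1 ≤ n ≤ N_s. Then every column of Φ is nonzero, with ‖Φ_j‖₂ = ‖A_j‖₂ ‖(B^*)_j‖₂, the Gram identity (Φ^*Φ)_{jk} = (A^*A)_{jk} (BB^*)_{kj} holds for all j,k, and the mutual coherence satisfies μ(Φ) ≤ μ(A) μ(B^*). -/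
open Matrix Finset Filter

noncomputable section

/-- A vector is `s`-sparse if it has at most `s` nonzero entries. -/
def sparse {n : Type*} (s : ℕ) (x : n → ℂ) : Prop := {i | x i ≠ 0}.ncard ≤ s

/-- The ℓ² norm of the `j`-th column of a matrix. -/
def colNorm {m n : Type*} [Fintype m] (A : Matrix m n ℂ) (j : n) : ℝ :=
  Real.sqrt (∑ i, ‖A i j‖ ^ 2)

/-- The mutual coherence of a matrix:
`μ(A) = max_{j ≠ k} |⟨A_j, A_k⟩| / (‖A_j‖₂ ‖A_k‖₂)`. -/
def coherence {m n : Type*} [Fintype m] [Fintype n] (A : Matrix m n ℂ) : ℝ :=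
  sSup {r : ℝ | ∃ j k, j ≠ k ∧ r = ‖(Aᴴ * A) j k‖ / (colNorm A j * colNorm A k)}

/-- The ℓ¹ norm of a vector. -/
def l1 {n : Type*} [Fintype n] (x : n → ℂ) : ℝ := ∑ i, ‖x i‖

/-- The ℓ^∞ norm of a vector. -/
def linf {n : Type*} [Fintype n] (x : n → ℂ) : ℝ := ⨆ i, ‖x i‖

/-- The squared ℓ² norm of a vector. -/
def l2sq {n : Type*} [Fintype n] (x : n → ℂ) : ℝ := ∑ i, ‖x i‖ ^ 2

/-- The entrywise max norm of a matrix, `‖M‖_max = max_{i,j} |M_{ij}|`. -/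
def maxNorm {m n : Type*} [Fintype m] [Fintype n] (A : Matrix m n ℂ) : ℝ :=
  ⨆ p : m × n, ‖A p.1 p.2‖

/-- The induced ℓ¹ matrix norm (maximum absolute column sum). -/
def matL1 {m n : Type*} [Fintype m] [Fintype n] (A : Matrix m n ℂ) : ℝ :=
  ⨆ j, ∑ i, ‖A i j‖

/-- `x` is a hard thresholding `H_s(z)` of `z`: it agrees with `z` on an
index set `I` of size `s` consisting of entries of largest modulus, and
vanishes outside `I`. -/
def IsHardThreshold {n : Type*} [Fintype n] (s : ℕ) (z x : n → ℂ) : Prop :=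
  ∃ I : Finset n, I.card = s ∧ (∀ i ∈ I, ∀ j ∉ I, ‖z j‖ ≤ ‖z i‖) ∧
    (∀ i ∈ I, x i = z i) ∧ (∀ i ∉ I, x i = 0)

/-- `A` satisfies the restricted isometry property of order `t` with constant `δ`. -/
def SatisfiesRIP {m n : Type*} [Fintype m] [Fintype n] (A : Matrix m n ℂ) (t : ℕ) (δ : ℝ) :
    Prop :=
  0 < δ ∧ δ < 1 ∧ ∀ z : n → ℂ, sparse t z →
    (1 - δ) * l2sq z ≤ l2sq (A.mulVec z) ∧ l2sq (A.mulVec z) ≤ (1 + δ) * l2sq z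

/-- The spectral (operator ℓ²) norm of a square matrix. -/
def specNorm {n : Type*} [Fintype n] [DecidableEq n] (M : Matrix n n ℂ) : ℝ :=
  ‖Matrix.toEuclideanCLM (𝕜 := ℂ) M‖

/-!
Column `j` of `Φ` is the Kronecker product of column `j` of `A` and row `j` of `B`, so inner
products of columns of `Φ` factor as `⟨A_j, A_k⟩ · ⟨(B^*)_j, (B^*)_k⟩` up to conjugation, and so
do column norms. Hence each normalised column correlation of `Φ` is the product of those of `A`
and `B^*`; these lie in `[0, 1]` by Cauchy–Schwarz, and taking suprema gives the bound.
-/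

section Coherence

variable {m n : Type*} [Fintype m]

theorem colNorm_eq_norm_toLp (A : Matrix m n ℂ) (j : n) :
    colNorm A j = ‖WithLp.toLp 2 (fun i => A i j)‖ := by
  rw [colNorm, EuclideanSpace.norm_eq]

theorem conjTranspose_mul_self_apply_eq_inner (A : Matrix m n ℂ) (j k : n) :
    (Aᴴ * A) j k = inner ℂ (WithLp.toLp 2 (fun i => A i j)) (WithLp.toLp 2 (fun i => A i k)) := by
  rw [EuclideanSpace.inner_toLp_toLp, Matrix.mul_apply, dotProduct]
  simp only [Matrix.conjTranspose_apply, Pi.star_apply, mul_comm]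

theorem norm_conjTranspose_mul_self_apply_le (A : Matrix m n ℂ) (j k : n) :
    ‖(Aᴴ * A) j k‖ ≤ colNorm A j * colNorm A k := by
  rw [conjTranspose_mul_self_apply_eq_inner, colNorm_eq_norm_toLp, colNorm_eq_norm_toLp]
  exact norm_inner_le_norm _ _

def colCorrelation (A : Matrix m n ℂ) (j k : n) : ℝ :=
  ‖(Aᴴ * A) j k‖ / (colNorm A j * colNorm A k)

theorem colCorrelation_nonneg (A : Matrix m n ℂ) (j k : n) : 0 ≤ colCorrelation A j k := by
  unfold colCorrelation colNorm
  positivity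

-- For a zero column the quotient is `0 / 0 = 0`.
theorem colCorrelation_le_one (A : Matrix m n ℂ) (j k : n) : colCorrelation A j k ≤ 1 :=
  div_le_one_of_le₀ (norm_conjTranspose_mul_self_apply_le A j k)
    (mul_nonneg (Real.sqrt_nonneg _) (Real.sqrt_nonneg _))

variable [Fintype n]

theorem colCorrelation_le_coherence (A : Matrix m n ℂ) {j k : n} (hjk : j ≠ k) :
    colCorrelation A j k ≤ coherence A :=
  le_csSup ⟨1, by rintro r ⟨j, k, -, rfl⟩; exact colCorrelation_le_one A j k⟩ ⟨j, k, hjk, rfl⟩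

theorem coherence_nonneg (A : Matrix m n ℂ) : 0 ≤ coherence A :=
  Real.sSup_nonneg <| by rintro r ⟨j, k, -, rfl⟩; exact colCorrelation_nonneg A j k

theorem coherence_le_of_forall_colCorrelation_le (A : Matrix m n ℂ) {c : ℝ} (hc : 0 ≤ c)
    (h : ∀ j k, j ≠ k → colCorrelation A j k ≤ c) : coherence A ≤ c :=
  Real.sSup_le (by rintro r ⟨j, k, hjk, rfl⟩; exact h j k hjk) hc

end Coherence

section KhatriRao

variable {R m s n : Type*}

/-- The Khatri–Rao (column-wise Kronecker) product `A ⊙ Bᵀ`. -/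
def khatriRaoTranspose [Mul R] (A : Matrix m n R) (B : Matrix n s R) : Matrix (m × s) n R :=
  fun p j => A p.1 j * B j p.2

theorem exists_khatriRaoTranspose_ne_zero [Semiring R] [NoZeroDivisors R] [StarRing R]
    (A : Matrix m n R) (B : Matrix n s R) {j : n}
    (hA : ∃ i, A i j ≠ 0) (hB : ∃ l, Bᴴ l j ≠ 0) : ∃ p, khatriRaoTranspose A B p j ≠ 0 := by
  obtain ⟨i, hi⟩ := hA
  obtain ⟨l, hl⟩ := hB
  exact ⟨(i, l), mul_ne_zero hi (star_ne_zero.mp hl)⟩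

variable [Fintype m] [Fintype s]

theorem conjTranspose_mul_self_khatriRaoTranspose_apply [CommSemiring R] [StarRing R]
    (A : Matrix m n R) (B : Matrix n s R) (j k : n) :
    ((khatriRaoTranspose A B)ᴴ * khatriRaoTranspose A B) j k = (Aᴴ * A) j k * (B * Bᴴ) k j := by
  simp only [Matrix.mul_apply, Matrix.conjTranspose_apply, khatriRaoTranspose,
    Fintype.sum_prod_type, Finset.sum_mul_sum, star_mul']
  refine Finset.sum_congr rfl fun i _ => Finset.sum_congr rfl fun l _ => ?_
  ring

theorem colNorm_khatriRaoTranspose (A : Matrix m n ℂ) (B : Matrix n s ℂ) (j : n) :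
    colNorm (khatriRaoTranspose A B) j = colNorm A j * colNorm Bᴴ j := by
  rw [colNorm, colNorm, colNorm, ← Real.sqrt_mul (by positivity), Fintype.sum_prod_type,
    Finset.sum_mul_sum]
  simp only [khatriRaoTranspose, Matrix.conjTranspose_apply, norm_mul, norm_star, mul_pow]

theorem colCorrelation_khatriRaoTranspose (A : Matrix m n ℂ) (B : Matrix n s ℂ) (j k : n) :
    colCorrelation (khatriRaoTranspose A B) j k =
      colCorrelation A j k * colCorrelation Bᴴ j k := by
  have hBB : ‖(B * Bᴴ) k j‖ = ‖(Bᴴᴴ * Bᴴ) j k‖ := by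
    rw [Matrix.conjTranspose_conjTranspose, ← (Matrix.isHermitian_mul_conjTranspose_self B).apply,
      norm_star]
  rw [colCorrelation, conjTranspose_mul_self_khatriRaoTranspose_apply, norm_mul,
    colNorm_khatriRaoTranspose, colNorm_khatriRaoTranspose, hBB, colCorrelation, colCorrelation,
    div_mul_div_comm, mul_mul_mul_comm]

theorem coherence_khatriRaoTranspose_le [Fintype n] (A : Matrix m n ℂ) (B : Matrix n s ℂ) :
    coherence (khatriRaoTranspose A B) ≤ coherence A * coherence Bᴴ := by
  refine coherence_le_of_forall_colCorrelation_le _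
    (mul_nonneg (coherence_nonneg A) (coherence_nonneg Bᴴ)) fun j k hjk => ?_
  rw [colCorrelation_khatriRaoTranspose]
  exact mul_le_mul (colCorrelation_le_coherence A hjk) (colCorrelation_le_coherence Bᴴ hjk)
    (colCorrelation_nonneg Bᴴ j k) (coherence_nonneg A)

end KhatriRao

/-- Equations (3.3) and (4.1): structure of the scattering sensing matrix and
`μ(Φ) ≤ μ(A) μ(B^*)`. -/
theorem scattering_sensing_matrix_coherence {Nd Ns N : ℕ}
    (A : Matrix (Fin Nd) (Fin N) ℂ) (B : Matrix (Fin N) (Fin Ns) ℂ)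
    (hA : ∀ j, ∃ i, A i j ≠ 0) (hB : ∀ j, ∃ i, Bᴴ i j ≠ 0)
    (Φ : Matrix (Fin Nd × Fin Ns) (Fin N) ℂ)
    (hΦ : ∀ p j, Φ p j = A p.1 j * B j p.2) :
    (∀ j, ∃ p, Φ p j ≠ 0) ∧
    (∀ j, colNorm Φ j = colNorm A j * colNorm Bᴴ j) ∧
    (∀ j k, (Φᴴ * Φ) j k = (Aᴴ * A) j k * (B * Bᴴ) k j) ∧
    coherence Φ ≤ coherence A * coherence Bᴴ := by
  obtain rfl : Φ = khatriRaoTranspose A B := Matrix.ext hΦ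
  exact ⟨fun j => exists_khatriRaoTranspose_ne_zero A B (hA j) (hB j),
    colNorm_khatriRaoTranspose A B, conjTranspose_mul_self_khatriRaoTranspose_apply A B,
    coherence_khatriRaoTranspose_le A B⟩

end
end

section
/- Let A be an L×N complex matrix satisfying the restricted isometry property of order 2s with constant δ₂ₛᴬ, let V be an N×N diagonal matrix with at most s nonzero diagonal entries, let G be an N×N complex matrix, and suppose γ = ‖VG‖₂ < 1/2 (spectral norm), so that I − VG is invertible. Then for every s-sparse x ∈ ℂ^N, (1 − δ₂ₛᴬ) ( (1−2γ)/(1−γ) )² ‖x‖₂² ≤ ‖ A (I − VG)^{-1} x ‖₂² ≤ ( (1 + δ₂ₛᴬ) / (1−γ)² ) ‖x‖₂². -/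
open Matrix Finset Filter

noncomputable section

/-!
Put `y = (1 - V G)⁻¹ x`. Then `y = x + V (G y)`, so `y` is supported in `supp x ∪ supp v` and is
`2s`-sparse, and the RIP of `A` applies to `y`. Since `x = y - V G y` with `‖V G y‖ ≤ γ ‖y‖`, the
triangle inequality gives `(1 - γ) ‖y‖ ≤ ‖x‖ ≤ (1 + γ) ‖y‖`; the lower factor `(1 - 2γ) / (1 - γ)`
of the statement is at most `1 / (1 + γ)`.
-/

open scoped Matrix.Norms.L2Operator

lemma l2sq_eq_norm_toLp_sq {n : Type*} [Fintype n] (x : n → ℂ) :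
    l2sq x = ‖WithLp.toLp 2 x‖ ^ 2 := by
  rw [EuclideanSpace.norm_sq_eq]
  rfl

lemma sparse_add_mul {n : Type*} [Finite n] {s t : ℕ} {x v : n → ℂ} (hx : sparse s x)
    (hv : sparse t v) (w : n → ℂ) : sparse (s + t) (x + v * w) := by
  have hsupp : {i | (x + v * w) i ≠ 0} ⊆ {i | x i ≠ 0} ∪ {i | v i ≠ 0} := by
    intro i hi
    by_contra hout
    simp_all
  calc {i | (x + v * w) i ≠ 0}.ncard ≤ ({i | x i ≠ 0} ∪ {i | v i ≠ 0}).ncard :=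
        Set.ncard_le_ncard hsupp
    _ ≤ s + t := (Set.ncard_union_le _ _).trans (add_le_add hx hv)

lemma sq_norm_bounds_of_norm_le {E : Type*} [SeminormedAddCommGroup E] {y z : E} {γ : ℝ}
    (hγ : γ < 1 / 2) (hz : ‖z‖ ≤ γ * ‖y‖) :
    ((1 - 2 * γ) / (1 - γ)) ^ 2 * ‖y - z‖ ^ 2 ≤ ‖y‖ ^ 2 ∧
      ‖y‖ ^ 2 ≤ ‖y - z‖ ^ 2 / (1 - γ) ^ 2 := by
  have hγ1 : 0 < 1 - γ := by linarith
  have hlow : (1 - γ) * ‖y‖ ≤ ‖y - z‖ := by linarith [norm_sub_norm_le y z]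
  have hup : ‖y - z‖ ≤ (1 + γ) * ‖y‖ := by linarith [norm_sub_le y z]
  constructor
  · rw [← mul_pow]
    refine pow_le_pow_left₀ (mul_nonneg (div_nonneg (by linarith) hγ1.le) (norm_nonneg _)) ?_ 2
    rw [div_mul_eq_mul_div, div_le_iff₀ hγ1]
    calc (1 - 2 * γ) * ‖y - z‖ ≤ (1 - 2 * γ) * ((1 + γ) * ‖y‖) :=
          mul_le_mul_of_nonneg_left hup (by linarith)
      _ ≤ ‖y‖ * (1 - γ) := by nlinarith [mul_nonneg (sq_nonneg γ) (norm_nonneg y)]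
  · rw [← div_pow]
    refine pow_le_pow_left₀ (norm_nonneg y) ?_ 2
    rwa [le_div_iff₀ hγ1, mul_comm]

section Resolvent

variable {n : Type*} [Fintype n] [DecidableEq n]

lemma isUnit_det_one_sub_of_specNorm_lt_one {M : Matrix n n ℂ} (hM : specNorm M < 1) :
    IsUnit (1 - M).det :=
  -- `specNorm M` is definitionally the `L2Operator` norm `‖M‖`.
  (isUnit_iff_isUnit_det _).mp (isUnit_one_sub_of_norm_lt_one hM)

lemma inv_one_sub_mulVec_sub_mulVec {M : Matrix n n ℂ} (hM : IsUnit (1 - M).det) (x : n → ℂ) :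
    (1 - M)⁻¹ *ᵥ x - M *ᵥ ((1 - M)⁻¹ *ᵥ x) = x := by
  have h : (1 - M) *ᵥ ((1 - M)⁻¹ *ᵥ x) = x := by
    rw [mulVec_mulVec, mul_nonsing_inv _ hM, one_mulVec]
  rwa [sub_mulVec, one_mulVec] at h

lemma sparse_inv_one_sub_diagonal_mul_mulVec {s t : ℕ} {x v : n → ℂ} (hx : sparse s x)
    (hv : sparse t v) (G : Matrix n n ℂ) (hdet : IsUnit (1 - diagonal v * G).det) :
    sparse (s + t) ((1 - diagonal v * G)⁻¹ *ᵥ x) := by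
  set y := (1 - diagonal v * G)⁻¹ *ᵥ x
  have hy : y = x + v * (G *ᵥ y) := by
    have hVG : (diagonal v * G) *ᵥ y = v * (G *ᵥ y) := by
      rw [← mulVec_mulVec]
      exact funext (mulVec_diagonal v _)
    rw [← hVG]
    exact sub_eq_iff_eq_add.mp (inv_one_sub_mulVec_sub_mulVec hdet x)
  rw [hy]
  exact sparse_add_mul hx hv _

lemma l2sq_inv_one_sub_mulVec_bounds {M : Matrix n n ℂ} (hM : specNorm M < 1 / 2) (x : n → ℂ) :
    ((1 - 2 * specNorm M) / (1 - specNorm M)) ^ 2 * l2sq x ≤ l2sq ((1 - M)⁻¹ *ᵥ x) ∧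
      l2sq ((1 - M)⁻¹ *ᵥ x) ≤ l2sq x / (1 - specNorm M) ^ 2 := by
  set y := (1 - M)⁻¹ *ᵥ x
  have hMy : ‖WithLp.toLp 2 (M *ᵥ y)‖ ≤ specNorm M * ‖WithLp.toLp 2 y‖ := by
    rw [← toEuclideanCLM_toLp]
    exact (toEuclideanCLM (𝕜 := ℂ) M).le_opNorm _
  have hx : x = y - M *ᵥ y :=
    (inv_one_sub_mulVec_sub_mulVec (isUnit_det_one_sub_of_specNorm_lt_one (by linarith)) x).symm
  rw [hx, l2sq_eq_norm_toLp_sq, l2sq_eq_norm_toLp_sq, WithLp.toLp_sub]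
  exact sq_norm_bounds_of_norm_le hM hMy

end Resolvent

/-- Appendix B: RIP sandwich bound for `A(I − VG)⁻¹`. -/
theorem RIP_resolvent_bound {L N : ℕ} (s : ℕ)
    (A : Matrix (Fin L) (Fin N) ℂ)
    (δA : ℝ) (hRIP : SatisfiesRIP A (2 * s) δA)
    (v : Fin N → ℂ) (hv : sparse s v)
    (G : Matrix (Fin N) (Fin N) ℂ)
    (γ : ℝ) (hγ : γ = specNorm (Matrix.diagonal v * G)) (hγhalf : γ < 1 / 2) :
    ∀ x : Fin N → ℂ, sparse s x →
      (1 - δA) * ((1 - 2 * γ) / (1 - γ)) ^ 2 * l2sq x ≤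
        l2sq ((A * (1 - Matrix.diagonal v * G)⁻¹).mulVec x) ∧
      l2sq ((A * (1 - Matrix.diagonal v * G)⁻¹).mulVec x) ≤
        (1 + δA) / (1 - γ) ^ 2 * l2sq x := by
  intro x hx
  obtain ⟨hδ0, hδ1, hRIP⟩ := hRIP
  subst hγ
  have hdet := isUnit_det_one_sub_of_specNorm_lt_one (hγhalf.trans one_half_lt_one)
  have hy := sparse_inv_one_sub_diagonal_mul_mulVec hx hv G hdet
  obtain ⟨hlow, hup⟩ := l2sq_inv_one_sub_mulVec_bounds hγhalf x
  obtain ⟨hAlow, hAup⟩ := hRIP _ (two_mul s ▸ hy)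
  rw [← mulVec_mulVec]
  constructor
  · calc _ = (1 - δA) * (((1 - 2 * _) / (1 - _)) ^ 2 * l2sq x) := mul_assoc _ _ _
      _ ≤ (1 - δA) * l2sq ((1 - diagonal v * G)⁻¹ *ᵥ x) :=
          mul_le_mul_of_nonneg_left hlow (by linarith)
      _ ≤ _ := hAlow
  · calc _ ≤ (1 + δA) * l2sq ((1 - diagonal v * G)⁻¹ *ᵥ x) := hAup
      _ ≤ (1 + δA) * (l2sq x / (1 - _) ^ 2) := mul_le_mul_of_nonneg_left hup (by linarith)
      _ = _ := by ring

end
end
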